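/- Let G be a connected bipartite simple graph, let F be a set of edges of G, and let φ : V(F) → {1,…,p}. If 𝒳 = {X₁,…,X_p} and 𝒴 = {Y₁,…,Y_p} are convex p-partitions of G such that (F,φ) is both an 𝒳-skeleton and a 𝒴-skeleton, then X_i = Y_i for every i ∈ {1,…,p}; that is, a convex p-partition of G with a given skeleton is unique. -/
import Mathlib


/-- A set `C` of vertices of `G` is convex if it contains every vertex lying on a
shortest path between two of its vertices (expressed via distances). -/
def GraphConvex {V : Type*} (G : SimpleGraph V) (C : Set V) : Prop :=
  ∀ u ∈ C, ∀ w ∈ C, ∀ v : V, G.edist u v + G.edist v w = G.edist u w → v ∈ C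

/-- `X : Fin p → Set V` is a convex `p`-partition of `G`: the parts are nonempty,
pairwise disjoint, cover all vertices, and each part is convex. -/
def IsConvexPartition {V : Type*} (G : SimpleGraph V) {p : ℕ} (X : Fin p → Set V) : Prop :=
  (∀ i, (X i).Nonempty) ∧ (∀ i j, i ≠ j → Disjoint (X i) (X j)) ∧
    (⋃ i, X i) = (Set.univ : Set V) ∧ (∀ i, GraphConvex G (X i))

/-- `V(F)`: the set of endvertices of the edges in `F`. -/
def endVerts {V : Type*} (F : Set (Sym2 V)) : Set V := {v | ∃ e ∈ F, v ∈ e}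

/-- `(F, φ)` is an `𝒳`-skeleton for the partition `X`: `F` is a set of edges of `G`,
each edge of `F` joins two distinct parts, whenever some edge of `G` joins two distinct
parts there is exactly one edge of `F` joining them, and on `V(F)` the function `φ`
records the index of the part containing each vertex. -/
def IsSkeleton {V : Type*} (G : SimpleGraph V) {p : ℕ} (X : Fin p → Set V)
    (F : Set (Sym2 V)) (φ : V → Fin p) : Prop :=
  F ⊆ G.edgeSet ∧
  (∀ u v : V, s(u, v) ∈ F → ∀ i, ¬(u ∈ X i ∧ v ∈ X i)) ∧
  (∀ i j : Fin p, i ≠ j → (∃ u v, G.Adj u v ∧ u ∈ X i ∧ v ∈ X j) →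
      ∃! e : Sym2 V, e ∈ F ∧ ∃ u v, e = s(u, v) ∧ u ∈ X i ∧ v ∈ X j) ∧
  (∀ v ∈ endVerts F, ∀ i, φ v = i ↔ v ∈ X i)

/-- The list `L(u) = [p] − {φ(w) : u ∈ X_{vw} for some vw ∈ F}`. -/
def Lset {V : Type*} (G : SimpleGraph V) {p : ℕ} (F : Set (Sym2 V)) (φ : V → Fin p)
    (u : V) : Set (Fin p) :=
  {i | ¬ ∃ v w : V, s(v, w) ∈ F ∧ φ w = i ∧ G.edist u v < G.edist u w}

/-- The list `L'(u) = L(u) − {φ(w) : w ∈ V(F) and φ(w) ∉ L(v) for some v ∈ I[u,w]}`. -/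
def L'set {V : Type*} (G : SimpleGraph V) {p : ℕ} (F : Set (Sym2 V)) (φ : V → Fin p)
    (u : V) : Set (Fin p) :=
  Lset G F φ u \
    {i | ∃ w ∈ endVerts F, φ w = i ∧
      ∃ v : V, G.edist u v + G.edist v w = G.edist u w ∧ i ∉ Lset G F φ v}

section aux

variable {V : Type*} {G : SimpleGraph V}

private lemma edist_coe (hconn : G.Connected) (u v : V) :
    G.edist u v = (G.dist u v : ℕ∞) := by
  rw [SimpleGraph.dist]
  exact (ENat.coe_toNat (by rw [SimpleGraph.edist_ne_top_iff_reachable]; exact hconn u v)).symm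

private lemma dist_parity (hconn : G.Connected) (c : G.Coloring Bool)
    {u v w : V} (h : G.Adj v w) : G.dist u v ≠ G.dist u w := by
  obtain ⟨p, hp⟩ := (hconn u v).exists_walk_length_eq_dist
  obtain ⟨q, hq⟩ := (hconn u w).exists_walk_length_eq_dist
  have hpv := c.even_length_iff_congr p
  have hqw := c.even_length_iff_congr q
  have hvw := c.valid h
  intro heq
  rw [hp] at hpv
  rw [hq, ← heq] at hqw
  rw [hpv] at hqw
  apply hvw
  by_cases hcv : c v <;> by_cases hcw : c w <;> simp_all

private lemma lemA (hconn : G.Connected) (hbip : G.Colorable 2) {C : Set V}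
    (hC : GraphConvex G C) {u w v : V} (hu : u ∈ C) (hw : w ∈ C) (hv : v ∉ C)
    (hadj : G.Adj v w) : G.edist u w < G.edist u v := by
  obtain ⟨c0⟩ := hbip
  let c : G.Coloring Bool := G.recolorOfEquiv finTwoEquiv c0
  rw [edist_coe hconn, edist_coe hconn, Nat.cast_lt]
  have hne : G.dist u w ≠ G.dist u v := fun h => dist_parity hconn c hadj h.symm
  by_contra hle
  push_neg at hle
  have hlt : G.dist u v < G.dist u w := lt_of_le_of_ne hle hne.symm
  have htri : G.dist u w ≤ G.dist u v + G.dist v w := hconn.dist_triangle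
  have hvw1 : G.dist v w = 1 := SimpleGraph.dist_eq_one_iff_adj.mpr hadj
  have heq : G.dist u v + G.dist v w = G.dist u w := by omega
  apply hv
  apply hC u hu w hw v
  rw [edist_coe hconn, edist_coe hconn, edist_coe hconn, ← Nat.cast_add, heq]

private lemma exists_cross {S : Set V} {a b : V} (W : G.Walk a b) (ha : a ∈ S)
    (hb : b ∉ S) : ∃ x y, G.Adj x y ∧ x ∈ S ∧ y ∉ S := by
  induction W with
  | nil => exact absurd ha hb
  | @cons x y z h q ih =>
    by_cases hy : y ∈ S
    · exact ih hy hb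
    · exact ⟨x, y, h, ha, hy⟩

/-- On a geodesic from `u ∉ K` to `w ∈ K`, there is a vertex `v ∉ K` adjacent to `K`. -/
private lemma claimC (hconn : G.Connected) (K : Set V) :
    ∀ n u w, G.dist u w = n → u ∉ K → w ∈ K →
      ∃ v, G.edist u v + G.edist v w = G.edist u w ∧ v ∉ K ∧ ∃ z, G.Adj v z ∧ z ∈ K := by
  intro n
  induction n using Nat.strong_induction_on with
  | _ n ih =>
    intro u w hd hu hw
    have hne : u ≠ w := fun h => hu (h ▸ hw)
    have hpos : 0 < G.dist u w := hconn.pos_dist_of_ne hne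
    obtain ⟨W, hW⟩ := (hconn u w).exists_walk_length_eq_dist
    cases W with
    | nil => simp [← hW] at hpos
    | @cons _ z _ h q =>
      simp only [SimpleGraph.Walk.length_cons] at hW
      have hqz : G.dist z w ≤ q.length := SimpleGraph.dist_le q
      have huz : G.dist u z = 1 := SimpleGraph.dist_eq_one_iff_adj.mpr h
      have htri : G.dist u w ≤ G.dist u z + G.dist z w := hconn.dist_triangle
      have hzw : G.dist z w + 1 = G.dist u w := by omega
      by_cases hz : z ∈ K
      · exact ⟨u, by rw [SimpleGraph.edist_self, zero_add], hu, z, h, hz⟩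
      · obtain ⟨v, hv1, hv2, hv3⟩ := ih (G.dist z w) (by omega) z w rfl hz hw
        refine ⟨v, ?_, hv2, hv3⟩
        rw [edist_coe hconn, edist_coe hconn, edist_coe hconn, ← Nat.cast_add,
          Nat.cast_inj]
        rw [edist_coe hconn, edist_coe hconn, edist_coe hconn, ← Nat.cast_add,
          Nat.cast_inj] at hv1
        have t1 : G.dist u v ≤ G.dist u z + G.dist z v := hconn.dist_triangle
        have t2 : G.dist u w ≤ G.dist u v + G.dist v w := hconn.dist_triangle
        omega

variable {p : ℕ} {F : Set (Sym2 V)} {φ : V → Fin p} {X : Fin p → Set V}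

private lemma mem_Lset (hconn : G.Connected) (hbip : G.Colorable 2)
    (hX : IsConvexPartition G X) (hskel : IsSkeleton G X F φ)
    {u : V} {i : Fin p} (hu : u ∈ X i) : i ∈ Lset G F φ u := by
  rintro ⟨v, w, hF, hφ, hlt⟩
  have hwV : w ∈ endVerts F := ⟨s(v, w), hF, Sym2.mem_mk_right v w⟩
  have hwX : w ∈ X i := (hskel.2.2.2 w hwV i).mp hφ
  have hadj : G.Adj v w := G.mem_edgeSet.mp (hskel.1 hF)
  have hvX : v ∉ X i := fun hv => hskel.2.1 v w hF i ⟨hv, hwX⟩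
  exact absurd hlt (asymm (lemA hconn hbip (hX.2.2.2 i) hu hwX hvX hadj))

private lemma mem_L'set (hconn : G.Connected) (hbip : G.Colorable 2)
    (hX : IsConvexPartition G X) (hskel : IsSkeleton G X F φ)
    {u : V} {i : Fin p} (hu : u ∈ X i) : i ∈ L'set G F φ u := by
  refine ⟨mem_Lset hconn hbip hX hskel hu, ?_⟩
  rintro ⟨w, hwV, hφ, v, hgeo, hvL⟩
  have hwX : w ∈ X i := (hskel.2.2.2 w hwV i).mp hφ
  have hvX : v ∈ X i := hX.2.2.2 i u hu w hwX v hgeo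
  exact hvL (mem_Lset hconn hbip hX hskel hvX)

private lemma not_mem_L'set (hconn : G.Connected) (hbip : G.Colorable 2)
    (hX : IsConvexPartition G X) (hskel : IsSkeleton G X F φ)
    {u : V} {k : Fin p} (hu : u ∉ X k) {w0 : V} (hw0V : w0 ∈ endVerts F)
    (hw0k : w0 ∈ X k) : k ∉ L'set G F φ u := by
  obtain ⟨v, hgeo, hvK, z, hadj, hzK⟩ := claimC hconn (X k) (G.dist u w0) u w0 rfl hu hw0k
  -- part containing v
  have hvU : v ∈ ⋃ j, X j := hX.2.2.1 ▸ Set.mem_univ v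
  obtain ⟨j, hvj⟩ := Set.mem_iUnion.mp hvU
  have hjk : j ≠ k := fun h => hvK (h ▸ hvj)
  obtain ⟨e, ⟨heF, v', w', he, hv'j, hw'k⟩, -⟩ :=
    hskel.2.2.1 j k hjk ⟨v, z, hadj, hvj, hzK⟩
  rw [he] at heF
  have hw'V : w' ∈ endVerts F := ⟨s(v', w'), heF, Sym2.mem_mk_right v' w'⟩
  have hφw' : φ w' = k := (hskel.2.2.2 w' hw'V k).mpr hw'k
  have hadj' : G.Adj w' v' := (G.mem_edgeSet.mp (hskel.1 heF)).symm
  have hw'j : w' ∉ X j := fun hw => hskel.2.1 v' w' heF j ⟨hv'j, hw⟩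
  have hkLv : k ∉ Lset G F φ v := by
    intro hL
    exact hL ⟨v', w', heF, hφw', lemA hconn hbip (hX.2.2.2 j) hvj hv'j hw'j hadj'⟩
  rintro ⟨-, hnot⟩
  exact hnot ⟨w0, hw0V, (hskel.2.2.2 w0 hw0V k).mpr hw0k, v, hgeo, hkLv⟩

private lemma subset_lem (hconn : G.Connected) (hbip : G.Colorable 2)
    {Y : Fin p → Set V}
    (hX : IsConvexPartition G X) (hY : IsConvexPartition G Y)
    (hXskel : IsSkeleton G X F φ) (hYskel : IsSkeleton G Y F φ)
    (i : Fin p) : X i ⊆ Y i := by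
  intro u hu
  have huU : u ∈ ⋃ j, Y j := hY.2.2.1 ▸ Set.mem_univ u
  obtain ⟨j, huj⟩ := Set.mem_iUnion.mp huU
  by_cases hij : i = j
  · exact hij ▸ huj
  · exfalso
    have huYi : u ∉ Y i := fun h => Set.disjoint_left.mp (hY.2.1 i j hij) h huj
    have hiL' : i ∈ L'set G F φ u := mem_L'set hconn hbip hX hXskel hu
    -- find a vertex of endVerts F in Y i
    obtain ⟨a, ha⟩ := hY.1 i
    obtain ⟨W⟩ := hconn a u
    obtain ⟨x, y, hxy, hxYi, hyYi⟩ := exists_cross W ha huYi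
    have hyU : y ∈ ⋃ m, Y m := hY.2.2.1 ▸ Set.mem_univ y
    obtain ⟨m, hym⟩ := Set.mem_iUnion.mp hyU
    have him : i ≠ m := fun h => hyYi (h ▸ hym)
    obtain ⟨e, ⟨heF, x', y', he, hx'i, hy'm⟩, -⟩ :=
      hYskel.2.2.1 i m him ⟨x, y, hxy, hxYi, hym⟩
    rw [he] at heF
    have hx'V : x' ∈ endVerts F := ⟨s(x', y'), heF, Sym2.mem_mk_left x' y'⟩
    exact not_mem_L'set hconn hbip hY hYskel huYi hx'V hx'i hiL'

end aux

/-- A convex `p`-partition of a connected bipartite graph with a given skeleton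
`(F, φ)` is unique. -/
theorem stmt_12 {V : Type*} [Fintype V] (G : SimpleGraph V)
    (hconn : G.Connected) (hbip : G.Colorable 2)
    (p : ℕ) (F : Set (Sym2 V)) (φ : V → Fin p)
    (X Y : Fin p → Set V)
    (hX : IsConvexPartition G X) (hY : IsConvexPartition G Y)
    (hXskel : IsSkeleton G X F φ) (hYskel : IsSkeleton G Y F φ) :
    ∀ i : Fin p, X i = Y i := fun i =>
  Set.Subset.antisymm (subset_lem hconn hbip hX hY hXskel hYskel i)
    (subset_lem hconn hbip hY hX hYskel hXskel i)
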